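/- arXiv:2112.13493 — 2 statements merged into one kernel-verified Lean document; each statement's English description precedes it below -/
import Mathlib

section
/- Let f : 𝕆 → 𝕆 be a real-linear map on the octonions satisfying f(p·x) = conj(p)·f(x) for all octonions p and x. Then f = 0. -/
/-! `f` is determined by `y = f 1`, since `f p = f (p · 1) = p̄ y`. Feeding this back into the
hypothesis and using `conj (p q) = q̄ p̄` gives `(a b) y = b (a y)` for all octonions `a`, `b`.
On the quaternion pairs `(u, 0), (v, 0)` this reads `(u v - v u) y₁ = 0`, and on `(0, u), (v̄, 0)`
together with `(0, 1), (v̄, 0)` it yields `ȳ₂ (u v - v u) = 0`. As the quaternions form a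
noncommutative division ring, `y = 0`. -/

noncomputable section

/-- The octonions, realized as the Cayley–Dickson double of the quaternions. -/
abbrev 𝕆 : Type := Quaternion ℝ × Quaternion ℝ

/-- Octonion multiplication via the Cayley–Dickson formula
`(a,b)(c,d) = (ac - d̄b, da + bc̄)`. -/
def omul (x y : 𝕆) : 𝕆 :=
  (x.1 * y.1 - star y.2 * x.2, y.2 * x.1 + x.2 * star y.1)

/-- Octonionic conjugation. -/
def oconj (x : 𝕆) : 𝕆 := (star x.1, -x.2)

/-- The octonion `1`. -/
def oone : 𝕆 := (1, 0)

/-- Real part of an octonion. -/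
def ore (x : 𝕆) : ℝ := x.1.re

/-- Embedding of the reals into the octonions. -/
def oreal (r : ℝ) : 𝕆 := ((r : Quaternion ℝ), 0)

/-- Squared norm of an octonion. -/
def onormSq (x : 𝕆) : ℝ := ore (omul x (oconj x))

theorem Quaternion.exists_mul_ne_mul : ∃ u v : Quaternion ℝ, u * v ≠ v * u :=
  ⟨⟨0, 1, 0, 0⟩, ⟨0, 0, 1, 0⟩, fun h => by
    have hk := congrArg QuaternionAlgebra.imK h
    erw [Quaternion.imK_mul, Quaternion.imK_mul] at hk
    norm_num at hk⟩

theorem omul_oone (x : 𝕆) : omul x oone = x := by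
  simp [omul, oone]

theorem omul_zero (x : 𝕆) : omul x 0 = 0 := by
  simp [omul]

theorem oconj_oconj (x : 𝕆) : oconj (oconj x) = x := by
  simp [oconj]

theorem oconj_omul (x y : 𝕆) : oconj (omul x y) = omul (oconj y) (oconj x) := by
  simp only [oconj, omul, star_sub, star_mul, star_star, star_neg, Prod.mk.injEq]
  constructor <;> noncomm_ring

theorem eq_zero_of_forall_omul_omul {y : 𝕆}
    (hy : ∀ a b : 𝕆, omul (omul a b) y = omul b (omul a y)) : y = 0 := by
  obtain ⟨u, v, huv⟩ := Quaternion.exists_mul_ne_mul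
  have hc : u * v - v * u ≠ 0 := sub_ne_zero.mpr huv
  have h₁ : (u * v - v * u) * y.1 = 0 := by
    have h := congrArg Prod.fst (hy (u, 0) (v, 0))
    simp only [omul, star_zero, mul_zero, sub_zero, zero_mul, add_zero] at h
    rw [sub_mul, h, mul_assoc, sub_self]
  have h₂ : star y.2 * (u * v - v * u) = 0 := by
    have hu := congrArg Prod.fst (hy (0, u) (star v, 0))
    have hone := congrArg Prod.fst (hy (0, 1) (star v, 0))
    simp only [omul, zero_mul, star_zero, sub_self, mul_zero, star_star, zero_add, zero_sub,
      mul_neg, star_mul, sub_zero, neg_inj, mul_one, one_mul, add_zero] at hu hone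
    rw [mul_sub, hu, ← mul_assoc (star y.2) v u, hone, mul_assoc, sub_self]
  ext1
  · simpa [hc] using h₁
  · simpa [hc] using h₂

theorem apply_eq_omul_oconj_of_map_omul {f : 𝕆 → 𝕆}
    (hf : ∀ p x : 𝕆, f (omul p x) = omul (oconj p) (f x)) (p : 𝕆) :
    f p = omul (oconj p) (f oone) := by
  rw [← hf, omul_oone]

theorem omul_omul_apply_oone_of_map_omul {f : 𝕆 → 𝕆}
    (hf : ∀ p x : 𝕆, f (omul p x) = omul (oconj p) (f x)) (a b : 𝕆) :
    omul (omul a b) (f oone) = omul b (omul a (f oone)) := by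
  have h := hf (oconj b) (oconj a)
  rwa [apply_eq_omul_oconj_of_map_omul hf (omul _ _), apply_eq_omul_oconj_of_map_omul hf (oconj a),
    oconj_omul, oconj_oconj, oconj_oconj] at h

/-- Any real-linear map f on the octonions with f(p*x) = conj(p)*f(x) is zero. -/
theorem stmt_0 (f : 𝕆 →ₗ[ℝ] 𝕆)
    (hf : ∀ p x : 𝕆, f (omul p x) = omul (oconj p) (f x)) :
    f = 0 := by
  have h₀ : f oone = 0 := eq_zero_of_forall_omul_omul (omul_omul_apply_oone_of_map_omul hf)
  refine LinearMap.ext fun p => ?_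
  rw [apply_eq_omul_oconj_of_map_omul hf, h₀, omul_zero, LinearMap.zero_apply]
end
end

section
/- The sedenion algebra 𝕊, viewed as a left 𝕆-module via octonion multiplication on the left, satisfies the alternating associator law: p·(p·s) = (p²)·s for all p ∈ 𝕆 and s ∈ 𝕊. -/
noncomputable section

/-- The sedenions, realized as the Cayley–Dickson double of the octonions. -/
abbrev 𝕊 : Type := 𝕆 × 𝕆

/-- The left `𝕆`-action on `𝕊`: `p·(a + b·e₈) = p·a + (b·p)·e₈`. -/
def smulS (p : 𝕆) (x : 𝕊) : 𝕊 := (omul p x.1, omul x.2 p)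

/-- Sedenion multiplication via the Cayley–Dickson formula. -/
def smulSed (x y : 𝕊) : 𝕊 :=
  (omul x.1 y.1 - omul (oconj y.2) x.2, omul y.2 x.1 + omul x.2 (oconj y.1))

/-- Sedenion conjugation. -/
def sconj (x : 𝕊) : 𝕊 := (oconj x.1, -x.2)

/-- The sedenion imaginary unit `e₈`. -/
def e₈ : 𝕊 := (0, oone)

/-- The embedding `𝕆 ↪ 𝕊`. -/
def ι𝕆 (a : 𝕆) : 𝕊 := (a, 0)

/-- The projection `π_𝕆 : 𝕊 → 𝕆`. -/
def π𝕆 (x : 𝕊) : 𝕆 := x.1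

/-- The `𝕆`-valued inner product `⟨s,w⟩ = π_𝕆(s · conj w)` on `𝕊`. -/
def sinner (s w : 𝕊) : 𝕆 := omul s.1 (oconj w.1) + omul (oconj w.2) s.2

/-! The action is `p·a` on the first factor and `b·p` on the second, so the law is the left and
right alternative law of `𝕆`. These hold in the Cayley–Dickson double of `ℍ` because the trace
`a + ā` and the norm `b̄b = bb̄` of a quaternion are real, hence central: expanding both sides, they
differ only by commutators with these elements. -/

namespace Quaternion

theorem commute_self_add_star {R : Type*} [CommRing R] (a y : ℍ[R]) : Commute (a + star a) y := by
  rw [self_add_star']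
  exact coe_commutes _ y

theorem commute_star_mul_self {R : Type*} [CommRing R] (b y : ℍ[R]) : Commute (star b * b) y := by
  rw [star_mul_self]
  exact coe_commutes _ y

end Quaternion

section Alternative

open Quaternion

theorem omul_self_omul (p x : 𝕆) : omul p (omul p x) = omul (omul p p) x := by
  obtain ⟨a, b⟩ := p
  obtain ⟨c, d⟩ := x
  simp only [omul, star_add, star_sub, star_mul, star_star, Prod.mk.injEq]
  constructor
  · calc a * (a * c - star d * b) - (star a * star d + c * star b) * b
        = a * a * c - (a + star a) * (star d * b) - c * (star b * b) := by noncomm_ring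
      _ = a * a * c - star d * b * (a + star a) - star b * b * c := by
          rw [(commute_self_add_star a _).eq, (commute_star_mul_self b c).eq]
      _ = (a * a - star b * b) * c - star d * (b * a + b * star a) := by noncomm_ring
  · calc (d * a + b * star c) * a + b * (star c * star a - star b * d)
        = d * a * a + b * (star c * (a + star a)) - b * star b * d := by noncomm_ring
      _ = d * a * a + b * ((a + star a) * star c) - d * (star b * b) := by
          rw [← (commute_self_add_star a _).eq, self_mul_star, ← star_mul_self,
            (commute_star_mul_self b d).eq]
      _ = d * (a * a - star b * b) + (b * a + b * star a) * star c := by noncomm_ring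

theorem omul_omul_self (x p : 𝕆) : omul (omul x p) p = omul x (omul p p) := by
  obtain ⟨a, b⟩ := p
  obtain ⟨c, d⟩ := x
  simp only [omul, star_add, star_sub, star_mul, star_star, Prod.mk.injEq]
  constructor
  · calc (c * a - star b * d) * a - star b * (b * c + d * star a)
        = c * a * a - star b * d * (a + star a) - star b * b * c := by noncomm_ring
      _ = c * a * a - (a + star a) * (star b * d) - c * (star b * b) := by
          rw [(commute_self_add_star a _).eq, (commute_star_mul_self b c).eq]
      _ = c * (a * a - star b * b) - (star a * star b + a * star b) * d := by noncomm_ring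
  · calc b * (c * a - star b * d) + (b * c + d * star a) * star a
        = b * (c * (a + star a)) - b * star b * d + d * star a * star a := by noncomm_ring
      _ = b * ((a + star a) * c) - d * (star b * b) + d * star a * star a := by
          rw [(commute_self_add_star a c).eq, self_mul_star, ← star_mul_self,
            (commute_star_mul_self b d).eq]
      _ = (b * a + b * star a) * c + d * (star a * star a - star b * b) := by noncomm_ring

end Alternative

/-- The sedenions form a left octonionic module: p(ps) = (p^2)s. -/
theorem stmt_13 (p : 𝕆) (s : 𝕊) : smulS p (smulS p s) = smulS (omul p p) s := by
  simp only [smulS, omul_self_omul, omul_omul_self]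
end
end
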